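/- Let λ > 1 and let X be the completion of c_00 under ‖x‖ = sup_{π,π'}(Σ_{n∈D} |x_n|/√(π(n)) + Σ_{n∉D} |x_n|/π'(n)), with D = {2^n : n ≥ 0} and π: D → ℕ, π': ℕ\D → ℕ bijections. Then the canonical basis is (λ, reverse conservative of type II): there exists C = C(λ) such that ‖1_A‖ ≤ C‖1_B‖ for all finite nonempty A, B ⊂ ℕ with (λ−1)s(A) + |A| ≤ |B| and B < A. -/

import Mathlib

open Finset Filter

noncomputable section

/-- The set `D = {2^k : k ≥ 0}`. -/
def Dset : Set ℕ := {n | ∃ k : ℕ, n = 2 ^ k}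

attribute [local instance] Classical.propDecidable

/-- The norm `‖x‖ = sup_{π,π'} (∑_{n ∈ D} |x_n|/√(π(n)) + ∑_{n ∉ D} |x_n|/π'(n))`,
where `π : D → {1,2,…}` and `π' : ℕ∖D → {1,2,…}` range over bijections
(here realized as equivalences onto `ℕ = {0,1,…}`, with weights shifted by 1). -/
def Nrm (x : ℕ →₀ ℝ) : ℝ :=
  ⨆ (π : Dset ≃ ℕ) (π' : ↥(Dsetᶜ) ≃ ℕ),
    ∑ n ∈ x.support,
      if h : n ∈ Dset then |x n| / Real.sqrt ((π ⟨n, h⟩ : ℝ) + 1)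
      else |x n| / ((π' ⟨n, h⟩ : ℝ) + 1)

/-- `1_A` as a finitely supported sequence. -/
def ind (A : Finset ℕ) : ℕ →₀ ℝ := ∑ n ∈ A, Finsupp.single n (1 : ℝ)

/-- `s(A) = max A - min A + 1` (and `s(∅) = 0`). -/
def spread (A : Finset ℕ) : ℕ :=
  if h : A.Nonempty then A.max' h - A.min' h + 1 else 0

/-! On indicator vectors the supremum defining the norm is attained by enumerating `A ∩ D` and
`A ∖ D` first, which gives `‖1_A‖ ≤ |A ∩ D| + H(|A|)` and `‖1_B‖ ≥ H(|B|)` for the harmonic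
numbers `H`. Distinct powers of two differ by a factor at least two, so `N = |A ∩ D|` forces
`2^N ≤ 2 s(A)`; the hypothesis then gives `|B| ≥ (λ - 1) 2^(N-1)`, hence
`N ≲ log |B| ≤ H(|B|)`, while `H(|A|) ≤ H(|B|)`. -/

lemma infinite_Dset : Dset.Infinite :=
  Set.infinite_of_injective_forall_mem (Nat.pow_right_injective le_rfl) fun k => ⟨k, rfl⟩

lemma infinite_compl_Dset : Dsetᶜ.Infinite := by
  refine Set.infinite_of_injective_forall_mem (f := fun k => 2 * k + 3)
    (fun a b h => by simpa using h) ?_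
  rintro k ⟨_ | j, hj⟩
  · omega
  · rw [pow_succ] at hj
    omega

instance : Infinite Dset := infinite_Dset.to_subtype

instance : Infinite ↥Dsetᶜ := infinite_compl_Dset.to_subtype

instance nonempty_equiv_nat {α : Type*} [Countable α] [Infinite α] : Nonempty (α ≃ ℕ) :=
  let ⟨_⟩ := nonempty_denumerable α
  ⟨Denumerable.eqv α⟩

theorem exists_equiv_nat_lt_card {α : Type*} [Countable α] [Infinite α] (T : Finset α) :
    ∃ π : α ≃ ℕ, ∀ t ∈ T, π t < #T := by
  have hT : Cardinal.mk (T : Set α) < Cardinal.mk α :=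
    (Cardinal.lt_aleph0_of_finite _).trans_le (Cardinal.aleph0_le_mk α)
  obtain ⟨π, hπ⟩ := Cardinal.extend_function_of_lt
    (T.equivFin.toEmbedding.trans Fin.valEmbedding) hT nonempty_equiv_nat
  exact ⟨π, fun t ht => (hπ ⟨t, ht⟩).trans_lt (Fin.is_lt _)⟩

section Rearrangement

variable {M : Type*} [AddCommMonoid M] [PartialOrder M] [IsOrderedAddMonoid M]

theorem Antitone.sum_le_sum_range_card {f : ℕ → M} (hf : Antitone f) (T : Finset ℕ) :
    ∑ j ∈ T, f j ≤ ∑ j ∈ range #T, f j := by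
  induction T using Finset.induction_on_max with
  | empty => simp
  | insert m s hlt ih =>
    have hm : m ∉ s := fun h => (hlt m h).false
    have hsm : #s ≤ m := by
      simpa using card_le_card (fun x hx => mem_range.2 (hlt x hx) : s ⊆ range m)
    rw [sum_insert hm, card_insert_of_notMem hm, sum_range_succ, add_comm]
    exact add_le_add ih (hf hsm)

theorem Antitone.sum_comp_le_sum_range_card {α : Type*} {f : ℕ → M} (hf : Antitone f)
    {s : Finset α} {u : α → ℕ} (hu : Set.InjOn u s) :
    ∑ x ∈ s, f (u x) ≤ ∑ j ∈ range #s, f j := by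
  classical
  rw [← sum_image hu, ← card_image_of_injOn hu]
  exact hf.sum_le_sum_range_card _

end Rearrangement

theorem sum_comp_eq_sum_range_card {α M : Type*} [AddCommMonoid M] (f : ℕ → M)
    {s : Finset α} {u : α → ℕ} (hu : Set.InjOn u s) (hlt : ∀ x ∈ s, u x < #s) :
    ∑ x ∈ s, f (u x) = ∑ j ∈ range #s, f j := by
  classical
  have himage : s.image u = range #s := by
    refine eq_of_subset_of_card_le ?_ (by rw [card_range, card_image_of_injOn hu])
    intro j hj
    obtain ⟨x, hx, rfl⟩ := mem_image.1 hj
    exact mem_range.2 (hlt x hx)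
  rw [← sum_image hu, himage]

lemma harmonic_mono : Monotone harmonic := fun m n hmn =>
  sum_le_sum_of_subset_of_nonneg (range_subset_range.2 hmn) fun _ _ _ => by positivity

lemma harmonic_add_le (m n : ℕ) : harmonic (m + n) ≤ harmonic m + harmonic n := by
  unfold harmonic
  rw [sum_range_add]
  gcongr with j
  linarith [(m.cast_nonneg : (0 : ℚ) ≤ m)]

lemma one_le_harmonic {n : ℕ} (hn : n ≠ 0) : 1 ≤ harmonic n := by
  simpa using harmonic_mono (Nat.one_le_iff_ne_zero.2 hn)

lemma harmonic_eq_sum_range (n : ℕ) : (harmonic n : ℝ) = ∑ j ∈ range n, 1 / ((j : ℝ) + 1) := by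
  simp [harmonic]

lemma two_mul_le_of_mem_Dset_of_lt {a b : ℕ} (ha : a ∈ Dset) (hb : b ∈ Dset) (h : a < b) :
    2 * a ≤ b := by
  obtain ⟨i, rfl⟩ := ha
  obtain ⟨j, rfl⟩ := hb
  rw [← pow_succ']
  exact Nat.pow_le_pow_right two_pos ((Nat.pow_lt_pow_iff_right (by norm_num)).1 h)

lemma two_pow_card_mul_le_of_subset_Dset {P : Finset ℕ} (hP : ↑P ⊆ Dset) (hne : P.Nonempty)
    {a b : ℕ} (ha : ∀ x ∈ P, a ≤ x) (hb : ∀ x ∈ P, x ≤ b) : 2 ^ #P * a ≤ 2 * b := by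
  induction P using Finset.induction_on_max generalizing b with
  | empty => exact absurd hne not_nonempty_empty
  | insert p s hlt ih =>
    have hp : p ∉ s := fun h => (hlt p h).false
    have hpD : p ∈ Dset := hP (mem_insert_self p s)
    have hpb : p ≤ b := hb p (mem_insert_self p s)
    rw [card_insert_of_notMem hp, pow_succ]
    rcases s.eq_empty_or_nonempty with rfl | hs
    · simpa using hpb.trans' (ha p (mem_insert_self p ∅))
    have hsD : ↑s ⊆ Dset := fun x hx => hP (mem_insert_of_mem hx)
    have hmax : 2 * s.max' hs ≤ p :=
      two_mul_le_of_mem_Dset_of_lt (hsD (s.max'_mem hs)) hpD (hlt _ (s.max'_mem hs))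
    have hs_le := ih hsD hs (fun x hx => ha x (mem_insert_of_mem hx)) (b := s.max' hs)
      (s.le_max' · ·)
    nlinarith

lemma two_pow_card_filter_Dset_le_two_mul_spread {A : Finset ℕ} (hA : A.Nonempty) :
    2 ^ #(A.filter (· ∈ Dset)) ≤ 2 * spread A := by
  set P := A.filter (· ∈ Dset)
  rw [spread, dif_pos hA]
  rcases P.eq_empty_or_nonempty with hP | hP
  · simp only [hP, card_empty, pow_zero]
    omega
  have hPD : ↑P ⊆ Dset := fun x hx => (mem_filter.1 hx).2
  have hPA : P ⊆ A := filter_subset _ _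
  have key := two_pow_card_mul_le_of_subset_Dset hPD hP (a := P.min' hP) (b := A.max' hA)
    (P.min'_le · ·) (fun x hx => A.le_max' x (hPA hx))
  have hm : 1 ≤ P.min' hP := by
    obtain ⟨k, hk⟩ := hPD (P.min'_mem hP)
    exact hk ▸ Nat.one_le_two_pow
  have hmin : A.min' hA ≤ P.min' hP := A.min'_le _ (hPA (P.min'_mem hP))
  have hmax : P.min' hP ≤ A.max' hA := A.le_max' _ (hPA (P.min'_mem hP))
  have hcard : 2 ≤ 2 ^ #P := Nat.le_self_pow (card_pos.2 hP).ne' 2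
  zify [hmin.trans hmax] at *
  nlinarith

lemma ind_apply (A : Finset ℕ) (n : ℕ) : ind A n = if n ∈ A then 1 else 0 := by
  simp [ind, Finsupp.finsetSum_apply, Finsupp.single_apply]

lemma support_ind (A : Finset ℕ) : (ind A).support = A := by
  ext n
  simp [ind_apply]

def weightSum (A : Finset ℕ) (π : Dset ≃ ℕ) (π' : ↥Dsetᶜ ≃ ℕ) : ℝ :=
  ∑ x ∈ A.subtype (· ∈ Dset), 1 / Real.sqrt ((π x : ℝ) + 1) +
    ∑ x ∈ A.subtype (· ∉ Dset), 1 / ((π' ⟨x, x.2⟩ : ℝ) + 1)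

lemma Nrm_ind (A : Finset ℕ) : Nrm (ind A) = ⨆ (π) (π'), weightSum A π π' := by
  refine iSup_congr fun π => iSup_congr fun π' => ?_
  rw [support_ind, ← sum_filter_add_sum_filter_not A (· ∈ Dset), weightSum,
    ← subtype_map, ← subtype_map]
  congr 1 <;> refine sum_subtype_map_embedding fun x hx => ?_
  · simp [ind_apply, mem_subtype.1 hx]
  · simp [ind_apply, mem_subtype.1 hx, x.2]

lemma weightSum_le (A : Finset ℕ) (π : Dset ≃ ℕ) (π' : ↥Dsetᶜ ≃ ℕ) :
    weightSum A π π' ≤ #(A.filter (· ∈ Dset)) + harmonic #A := by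
  have hD : ∑ x ∈ A.subtype (· ∈ Dset), 1 / Real.sqrt ((π x : ℝ) + 1)
      ≤ #(A.filter (· ∈ Dset)) := by
    rw [← card_subtype]
    refine (sum_le_card_nsmul _ _ 1 fun x _ => ?_).trans (by simp)
    rw [div_le_one (by positivity), Real.one_le_sqrt]
    linarith [(π x).cast_nonneg (α := ℝ)]
  have hanti : Antitone fun j : ℕ => 1 / ((j : ℝ) + 1) := fun i j hij => by
    dsimp only
    gcongr
  have hDc : ∑ x ∈ A.subtype (· ∉ Dset), 1 / ((π' ⟨x, x.2⟩ : ℝ) + 1) ≤ harmonic #A := by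
    refine (hanti.sum_comp_le_sum_range_card fun x _ y _ h => ?_).trans ?_
    · exact Subtype.ext (congrArg Subtype.val (π'.injective h))
    rw [← harmonic_eq_sum_range, Rat.cast_le, card_subtype]
    exact harmonic_mono (card_filter_le _ _)
  exact add_le_add hD hDc

lemma Nrm_ind_le (A : Finset ℕ) : Nrm (ind A) ≤ #(A.filter (· ∈ Dset)) + harmonic #A := by
  rw [Nrm_ind]
  exact ciSup_le fun π => ciSup_le fun π' => weightSum_le A π π'

lemma weightSum_le_Nrm_ind (A : Finset ℕ) (π : Dset ≃ ℕ) (π' : ↥Dsetᶜ ≃ ℕ) :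
    weightSum A π π' ≤ Nrm (ind A) := by
  have hbdd : ∀ π, BddAbove (Set.range (weightSum A π)) := fun π =>
    ⟨_, Set.forall_mem_range.2 (weightSum_le A π)⟩
  rw [Nrm_ind]
  refine (le_ciSup (hbdd π) π').trans (le_ciSup (f := fun π => ⨆ π', weightSum A π π') ?_ π)
  exact ⟨_, Set.forall_mem_range.2 fun π => ciSup_le (weightSum_le A π)⟩

lemma harmonic_card_le_Nrm_ind (B : Finset ℕ) : (harmonic #B : ℝ) ≤ Nrm (ind B) := by
  set P := B.subtype (· ∈ Dset)
  set Q := B.subtype (· ∉ Dset)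
  obtain ⟨π, hπ⟩ := exists_equiv_nat_lt_card P
  obtain ⟨π', hπ'⟩ := exists_equiv_nat_lt_card (α := ↥Dsetᶜ) Q
  have hcard : #B = #P + #Q := by
    rw [card_subtype, card_subtype, card_filter_add_card_filter_not]
  have hP : (harmonic #P : ℝ) ≤ ∑ x ∈ P, 1 / Real.sqrt ((π x : ℝ) + 1) := by
    rw [harmonic_eq_sum_range, ← sum_comp_eq_sum_range_card _ π.injective.injOn hπ]
    refine sum_le_sum fun x _ => one_div_le_one_div_of_le (by positivity) ?_
    exact Real.sqrt_le_self_iff.2 (.inr (by simp))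
  have hQ : (harmonic #Q : ℝ) = ∑ x ∈ Q, 1 / ((π' ⟨x, x.2⟩ : ℝ) + 1) := by
    rw [harmonic_eq_sum_range]
    refine (sum_comp_eq_sum_range_card (fun j => 1 / ((j : ℝ) + 1)) ?_ fun x hx => ?_).symm
    · exact fun x _ y _ h => Subtype.ext (congrArg Subtype.val (π'.injective h))
    · exact hπ' x hx
  calc (harmonic #B : ℝ) ≤ harmonic #P + harmonic #Q := by
        rw [hcard]; exact_mod_cast harmonic_add_le _ _
    _ ≤ weightSum B π π' := by rw [weightSum, hQ]; gcongr
    _ ≤ Nrm (ind B) := weightSum_le_Nrm_ind B π π'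

lemma exists_nat_le_mul_harmonic_of_mul_two_pow_le {c : ℝ} (hc : 0 < c) :
    ∃ K : ℝ, 0 < K ∧ ∀ N n : ℕ, n ≠ 0 → c * 2 ^ N ≤ n → (N : ℝ) ≤ K * harmonic n := by
  have hlog2 : 0 < Real.log 2 := Real.log_pos one_lt_two
  refine ⟨(1 + |Real.log c|) / Real.log 2, by positivity, fun N n hn hcn => ?_⟩
  have hH : (1 : ℝ) ≤ harmonic n := by exact_mod_cast one_le_harmonic hn
  have hlog : Real.log c + N * Real.log 2 ≤ harmonic n :=
    calc Real.log c + N * Real.log 2 = Real.log (c * 2 ^ N) := by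
          rw [Real.log_mul hc.ne' (by positivity), Real.log_pow]
      _ ≤ Real.log ↑(n + 1) := Real.log_le_log (by positivity) (by push_cast; linarith)
      _ ≤ harmonic n := log_add_one_le_harmonic n
  rw [div_mul_eq_mul_div, le_div_iff₀ hlog2]
  nlinarith [neg_abs_le (Real.log c), abs_nonneg (Real.log c)]

/-- the canonical basis of `X` is (λ, reverse conservative of
type II) for every `λ > 1`. -/
theorem stmt_15 (l : ℝ) (hl : 1 < l) :
    ∃ C : ℝ, 0 < C ∧ ∀ A B : Finset ℕ, A.Nonempty → B.Nonempty →
      (l - 1) * spread A + (A.card : ℝ) ≤ (B.card : ℝ) →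
      (∀ b ∈ B, ∀ a ∈ A, b < a) →
      Nrm (ind A) ≤ C * Nrm (ind B) := by
  obtain ⟨K, hK, hN⟩ := exists_nat_le_mul_harmonic_of_mul_two_pow_le (c := (l - 1) / 2)
    (by linarith)
  refine ⟨K + 1, by linarith, fun A B hA hB hAB _ => ?_⟩
  have hspread : (2 : ℝ) ^ #(A.filter (· ∈ Dset)) ≤ 2 * spread A := by
    exact_mod_cast two_pow_card_filter_Dset_le_two_mul_spread hA
  have hcardA : (harmonic #A : ℝ) ≤ harmonic #B := by
    have : #A ≤ #B := by exact_mod_cast (le_add_of_nonneg_left (by positivity)).trans hAB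
    exact_mod_cast harmonic_mono this
  have hpow : (l - 1) / 2 * 2 ^ #(A.filter (· ∈ Dset)) ≤ #B := by
    nlinarith [(#A).cast_nonneg (α := ℝ)]
  calc Nrm (ind A) ≤ #(A.filter (· ∈ Dset)) + harmonic #A := Nrm_ind_le A
    _ ≤ K * harmonic #B + harmonic #B := add_le_add (hN _ _ hB.card_pos.ne' hpow) hcardA
    _ = (K + 1) * harmonic #B := by ring
    _ ≤ (K + 1) * Nrm (ind B) := by gcongr; exact harmonic_card_le_Nrm_ind B
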